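/- In $W(\mathbb{Z},1)$, the positive part $W_+ = \mathrm{span}\{t^i D^j : i \ge 1, j \ge 0\}$ satisfies $W_k = (\mathrm{ad}_{t})^k (W_0)$ for every $k > 0$, where $W_0 = \mathrm{span}\{D^j : j \ge 0\}$; moreover $\mathrm{ad}_t$ is locally nilpotent on $W(\mathbb{Z},1)$. -/

import Mathlib

/-- The operator `tⁱ Dʲ` (`D = t d/dt`) on `F[t,t⁻¹]` (realized as `ℤ →₀ F`):
`t^n ↦ n^j t^{n+i}`. -/
noncomputable def weylOp (F : Type*) [Field F] (i : ℤ) (j : ℕ) :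
    Module.End F (ℤ →₀ F) :=
  Finsupp.lsum F fun n : ℤ => ((n : F) ^ j) • Finsupp.lsingle (n + i)

attribute [local instance 100] LieRing.ofAssociativeRing

section aux

variable (F : Type*) [Field F]

lemma weylOp_single (i : ℤ) (j : ℕ) (n : ℤ) (b : F) :
    weylOp F i j (Finsupp.single n b) = ((n : F) ^ j) • Finsupp.single (n + i) b := by
  rw [weylOp, Finsupp.lsum_single, LinearMap.smul_apply, Finsupp.lsingle_apply]

lemma ad_weylOp (i : ℤ) (j : ℕ) :
    (LieAlgebra.ad F (Module.End F (ℤ →₀ F))) (weylOp F 1 0) (weylOp F i j)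
      = ∑ l ∈ Finset.range j, (-(j.choose l : F)) • weylOp F (i+1) l := by
  rw [LieAlgebra.ad_apply, Ring.lie_def]
  apply Finsupp.lhom_ext
  intro n b
  have key : ((n : F) ^ j - ((n : F) + 1) ^ j)
      = ∑ l ∈ Finset.range j, (-(j.choose l : F)) * (n : F) ^ l := by
    rw [add_pow, Finset.sum_range_succ]
    simp only [one_pow, mul_one, Nat.choose_self, Nat.cast_one]
    rw [sub_add_eq_sub_sub, sub_sub_cancel_left, ← Finset.sum_neg_distrib]
    exact Finset.sum_congr rfl fun l _ => by ring
  have h1 : n + i + 1 = n + 1 + i := by ring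
  have h3 : n + (i + 1) = n + 1 + i := by ring
  simp only [LinearMap.sub_apply, LinearMap.sum_apply, Module.End.mul_apply,
    LinearMap.smul_apply, weylOp_single, map_smul, pow_zero, one_smul, h1, h3, smul_smul]
  push_cast
  rw [← sub_smul, key, Finset.sum_smul]

end aux

section aux2

variable (F : Type*) [Field F] [CharZero F]

local notation "adT" => (LieAlgebra.ad F (Module.End F (ℤ →₀ F))) (weylOp F 1 0)

lemma pow_apply_eq_zero_of_le {M : Type*} [AddCommGroup M] [Module F M]
    (f : Module.End F M) {x : M} {m m' : ℕ} (h : (f ^ m) x = 0) (hm : m ≤ m') :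
    (f ^ m') x = 0 := by
  obtain ⟨k, rfl⟩ := Nat.exists_eq_add_of_le hm
  rw [add_comm, pow_add, Module.End.mul_apply, h, map_zero]

set_option maxHeartbeats 800000 in
lemma map_ad_span (i : ℤ) :
    Submodule.map (adT : Module.End F (ℤ →₀ F) →ₗ[F] Module.End F (ℤ →₀ F))
        (Submodule.span F (Set.range fun j : ℕ => weylOp F i j))
      = Submodule.span F (Set.range fun j : ℕ => weylOp F (i+1) j) := by
  rw [Submodule.map_span]
  apply le_antisymm
  · rw [Submodule.span_le]
    rintro _ ⟨_, ⟨j, rfl⟩, rfl⟩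
    rw [ad_weylOp]
    exact Submodule.sum_mem _ fun l _ => Submodule.smul_mem _ _
      (Submodule.subset_span ⟨l, rfl⟩)
  · rw [Submodule.span_le]
    rintro _ ⟨j, rfl⟩
    induction j using Nat.strong_induction_on with
    | _ j ih =>
      have hform := ad_weylOp F i (j+1)
      rw [Finset.sum_range_succ] at hform
      have hc : ((j : F) + 1) ≠ 0 := by
        exact_mod_cast (Nat.cast_ne_zero (R := F)).2 (Nat.succ_ne_zero j)
      have hnz : (-((j+1).choose j : F)) ≠ 0 := by
        rw [Nat.choose_succ_self_right, neg_ne_zero]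
        exact_mod_cast Nat.succ_ne_zero j
      have hmem1 : (LieAlgebra.ad F (Module.End F (ℤ →₀ F))) (weylOp F 1 0) (weylOp F i (j+1))
          ∈ Submodule.span F ((adT : Module.End F (ℤ →₀ F) →ₗ[F] _) ''
              Set.range fun j : ℕ => weylOp F i j) :=
        Submodule.subset_span ⟨weylOp F i (j+1), ⟨j+1, rfl⟩, rfl⟩
      have hmem2 : ∑ l ∈ Finset.range j, (-((j+1).choose l : F)) • weylOp F (i+1) l
          ∈ Submodule.span F ((adT : Module.End F (ℤ →₀ F) →ₗ[F] _) ''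
              Set.range fun j : ℕ => weylOp F i j) :=
        Submodule.sum_mem _ fun l hl => Submodule.smul_mem _ _ (ih l (Finset.mem_range.1 hl))
      have hsub : (-((j+1).choose j : F)) • weylOp F (i+1) j ∈
          Submodule.span F ((adT : Module.End F (ℤ →₀ F) →ₗ[F] _) ''
              Set.range fun j : ℕ => weylOp F i j) := by
        have h4 := Submodule.sub_mem (Submodule.span F
          ((adT : Module.End F (ℤ →₀ F) →ₗ[F] _) ''
            Set.range fun j : ℕ => weylOp F i j)) hmem1 hmem2
        rw [hform] at h4
        have hh : ∀ S w : Module.End F (ℤ →₀ F), S + w - S = w := fun S w =>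
          add_sub_cancel_left S w
        rw [hh] at h4
        exact h4
      show weylOp F (i+1) j ∈ _
      have h5 : weylOp F (i+1) j = (-((j+1).choose j : F))⁻¹ •
          ((-((j+1).choose j : F)) • weylOp F (i+1) j) := by
        rw [smul_smul, inv_mul_cancel₀ hnz, one_smul]
      rw [h5]
      exact Submodule.smul_mem _ _ hsub

lemma map_ad_pow_span (k : ℕ) (i : ℤ) :
    Submodule.map ((adT ^ k : Module.End F (Module.End F (ℤ →₀ F))) :
          Module.End F (ℤ →₀ F) →ₗ[F] Module.End F (ℤ →₀ F))
        (Submodule.span F (Set.range fun j : ℕ => weylOp F i j))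
      = Submodule.span F (Set.range fun j : ℕ => weylOp F (i + k) j) := by
  induction k generalizing i with
  | zero => simp [Module.End.one_eq_id, Submodule.map_id]
  | succ k ih =>
    rw [pow_succ, Module.End.mul_eq_comp, Submodule.map_comp, map_ad_span F i, ih (i+1)]
    have : i + 1 + (k : ℤ) = i + ((k : ℕ) + 1 : ℕ) := by push_cast; ring
    rw [this]

lemma ad_pow_nilpotent (j : ℕ) : ∀ i : ℤ, (adT ^ (j+1)) (weylOp F i j) = 0 := by
  induction j using Nat.strong_induction_on with
  | _ j ih =>
    intro i
    rw [pow_succ, Module.End.mul_apply, ad_weylOp, map_sum]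
    apply Finset.sum_eq_zero
    intro l hl
    have hl' := Finset.mem_range.1 hl
    rw [map_smul]
    have : adT ^ j = adT ^ (j - (l+1)) * adT ^ (l+1) := by
      rw [← pow_add]
      congr 1
      omega
    rw [this, Module.End.mul_apply, ih l hl' (i+1), map_zero, smul_zero]

end aux2

/-- In `W(ℤ,1)`: `W_k = (ad_t)^k (W_0)` for every `k > 0`, and `ad_t` is
locally nilpotent on `W(ℤ,1)`. -/
theorem stmt_13 (F : Type*) [Field F] [CharZero F] :
    (∀ k : ℕ, 0 < k →
      Submodule.map
        (((LieAlgebra.ad F (Module.End F (ℤ →₀ F))) (weylOp F 1 0) ^ k :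
            Module.End F (Module.End F (ℤ →₀ F))) : Module.End F (ℤ →₀ F) →ₗ[F] Module.End F (ℤ →₀ F))
        (Submodule.span F (Set.range fun j : ℕ => weylOp F 0 j))
      = Submodule.span F (Set.range fun j : ℕ => weylOp F (k : ℤ) j)) ∧
    ∀ x ∈ Submodule.span F {y : Module.End F (ℤ →₀ F) | ∃ i j, y = weylOp F i j},
      ∃ m : ℕ, ((LieAlgebra.ad F (Module.End F (ℤ →₀ F))) (weylOp F 1 0) ^ m) x = 0 := by
  constructor
  · intro k _
    have := map_ad_pow_span F k 0
    simpa using this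
  · intro x hx
    induction hx using Submodule.span_induction with
    | mem y hy =>
      obtain ⟨i, j, rfl⟩ := hy
      exact ⟨j+1, ad_pow_nilpotent F j i⟩
    | zero => exact ⟨0, by simp⟩
    | add y z _ _ hy hz =>
      obtain ⟨m1, h1⟩ := hy
      obtain ⟨m2, h2⟩ := hz
      refine ⟨m1 + m2, ?_⟩
      rw [map_add, pow_apply_eq_zero_of_le F _ h1 (Nat.le_add_right m1 m2),
        pow_apply_eq_zero_of_le F _ h2 (Nat.le_add_left m2 m1), add_zero]
    | smul c y _ hy =>
      obtain ⟨m, h⟩ := hy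
      exact ⟨m, by rw [map_smul, h, smul_zero]⟩
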